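/- For every α > 0: lim_{r → ∞} r · DΨ^α(r) = 1/(2π). Consequently lim_{|x| → ∞} |x| · |K^α(x)| = 1/(2π), i.e. the smoothed kernel K^α decays like |x|^{-1} at infinity. -/

import Mathlib

noncomputable section

open Real MeasureTheory Filter Set intervalIntegral Classical

abbrev E2 := EuclideanSpace ℝ (Fin 2)

/-- The modified Bessel function of the second kind of order one,
`K₁(r) = r ∫_{1}^{∞} e^{-rt} (t²-1)^{1/2} dt`. -/
def besselK1 (r : ℝ) : ℝ := r * ∫ t in Set.Ioi (1:ℝ), Real.exp (-r * t) * (t ^ 2 - 1) ^ ((1:ℝ)/2)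

/-- `DΨ^α(r) = (1/(2π)) (1/r - (1/α) K₁(r/α))`. -/
def DPsi (α r : ℝ) : ℝ := (1 / (2 * π)) * (1 / r - (1 / α) * besselK1 (r / α))

/-- `(x₁, x₂)^⊥ = (-x₂, x₁)`. -/
def perp (x : E2) : E2 := (WithLp.equiv 2 (Fin 2 → ℝ)).symm ![-(x 1), x 0]

/-- The smoothed Birkhoff–Rott kernel `K^α(x) = (x^⊥/|x|) DΨ^α(|x|)`, `K^α(0) = 0`. -/
def Kalpha (α : ℝ) (x : E2) : E2 := if x = 0 then 0 else (DPsi α ‖x‖ / ‖x‖) • perp x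

/-!
On `t > 1` we have `√(t² - 1) ≤ t ≤ eᵗ`, so the integrand of `K₁(s)` is at most `e^{(1-s)t}` and
`K₁(s) ≤ s e^{1-s} / (s - 1)`. Hence `s K₁(s) → 0` exponentially fast, and
`r DΨ^α(r) = (1 - (r/α) K₁(r/α)) / (2π) → 1/(2π)`. Since `x^⊥` has the length of `x`,
`|x| |K^α(x)| = |r DΨ^α(r)|` with `r = |x|`, which gives the decay of the kernel.
-/

lemma besselK1_nonneg {s : ℝ} (hs : 0 ≤ s) : 0 ≤ besselK1 s := by
  refine mul_nonneg hs (setIntegral_nonneg measurableSet_Ioi fun t (ht : 1 < t) => ?_)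
  have : 0 ≤ t ^ 2 - 1 := by nlinarith
  positivity

lemma exp_neg_mul_mul_rpow_le {s t : ℝ} (ht : 1 ≤ t) :
    exp (-s * t) * (t ^ 2 - 1) ^ ((1 : ℝ) / 2) ≤ exp ((1 - s) * t) := by
  have hsqrt : (t ^ 2 - 1) ^ ((1 : ℝ) / 2) ≤ t := by
    rw [← sqrt_eq_rpow, sqrt_le_iff]
    constructor <;> nlinarith
  have hexp : t ≤ exp t := by linarith [add_one_le_exp t]
  calc exp (-s * t) * (t ^ 2 - 1) ^ ((1 : ℝ) / 2) ≤ exp (-s * t) * exp t :=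
        mul_le_mul_of_nonneg_left (hsqrt.trans hexp) (exp_pos _).le
    _ = exp ((1 - s) * t) := by rw [← exp_add]; ring_nf

lemma besselK1_le {s : ℝ} (hs : 1 < s) : besselK1 s ≤ s * (exp (1 - s) / (s - 1)) := by
  have hneg : 1 - s < 0 := by linarith
  have hint : (∫ t in Ioi (1 : ℝ), exp ((1 - s) * t)) = exp (1 - s) / (s - 1) := by
    rw [integral_exp_mul_Ioi hneg, mul_one, neg_div, ← div_neg, neg_sub]
  rw [besselK1, ← hint]
  refine mul_le_mul_of_nonneg_left (integral_mono_of_nonneg ?_ (integrableOn_exp_mul_Ioi hneg 1)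
    ?_) (by linarith)
  · refine (ae_restrict_iff' measurableSet_Ioi).2 (Eventually.of_forall fun t (ht : 1 < t) => ?_)
    have : 0 ≤ t ^ 2 - 1 := by nlinarith
    positivity
  · exact (ae_restrict_iff' measurableSet_Ioi).2
      (Eventually.of_forall fun t (ht : 1 < t) => exp_neg_mul_mul_rpow_le ht.le)

lemma tendsto_mul_besselK1_atTop : Tendsto (fun s : ℝ => s * besselK1 s) atTop (nhds 0) := by
  have hlim : Tendsto (fun s : ℝ => exp 1 * (s ^ 2 * exp (-s))) atTop (nhds 0) := by
    simpa using (tendsto_pow_mul_exp_neg_atTop_nhds_zero 2).const_mul (exp 1)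
  refine squeeze_zero' ?_ ?_ hlim
  · filter_upwards [eventually_ge_atTop 0] with s hs
    exact mul_nonneg hs (besselK1_nonneg hs)
  · filter_upwards [eventually_ge_atTop 2] with s hs
    have hinv : (s - 1)⁻¹ ≤ 1 := inv_le_one_of_one_le₀ (by linarith)
    calc s * besselK1 s ≤ s * (s * (exp (1 - s) / (s - 1))) :=
          mul_le_mul_of_nonneg_left (besselK1_le (by linarith)) (by linarith)
      _ = (s - 1)⁻¹ * (exp 1 * (s ^ 2 * exp (-s))) := by
          rw [sub_eq_add_neg, exp_add]; ring
      _ ≤ exp 1 * (s ^ 2 * exp (-s)) :=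
          mul_le_of_le_one_left (by positivity) hinv

lemma tendsto_mul_DPsi_atTop {α : ℝ} (hα : 0 < α) :
    Tendsto (fun r : ℝ => r * DPsi α r) atTop (nhds (1 / (2 * π))) := by
  have hK : Tendsto (fun r : ℝ => r / α * besselK1 (r / α)) atTop (nhds 0) :=
    tendsto_mul_besselK1_atTop.comp (tendsto_id.atTop_div_const hα)
  have hlim := (hK.const_sub 1).const_mul (1 / (2 * π))
  rw [sub_zero, mul_one] at hlim
  refine hlim.congr' ?_
  filter_upwards [eventually_gt_atTop 0] with r hr
  simp only [DPsi]
  field_simp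

lemma norm_perp (x : E2) : ‖perp x‖ = ‖x‖ := by
  simp only [EuclideanSpace.norm_eq, Fin.sum_univ_two]
  simp [perp, add_comm]

lemma norm_mul_norm_Kalpha (α : ℝ) {x : E2} (hx : x ≠ 0) :
    ‖x‖ * ‖Kalpha α x‖ = |‖x‖ * DPsi α ‖x‖| := by
  have hx' : 0 < ‖x‖ := norm_pos_iff.2 hx
  rw [Kalpha, if_neg hx, norm_smul, norm_perp, Real.norm_eq_abs, abs_div, abs_norm, abs_mul,
    abs_norm]
  field_simp

/-- decay of the smoothed kernel at infinity: `r·DΨ^α(r) → 1/(2π)` as `r → ∞`, and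
consequently `|x|·|K^α(x)| → 1/(2π)` as `|x| → ∞`, i.e. `K^α` decays like `|x|^{-1}`. -/
theorem Kalpha_decay_at_infinity (α : ℝ) (hα : 0 < α) :
    Tendsto (fun r : ℝ => r * DPsi α r) atTop (nhds (1 / (2 * π))) ∧
    Tendsto (fun x : E2 => ‖x‖ * ‖Kalpha α x‖) (Filter.comap norm atTop)
      (nhds (1 / (2 * π))) := by
  have hr := tendsto_mul_DPsi_atTop hα
  refine ⟨hr, ?_⟩
  have hnorm : Tendsto (fun x : E2 => ‖x‖) (comap norm atTop) atTop := tendsto_comap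
  have habs := hr.abs.comp hnorm
  rw [abs_of_pos (by positivity)] at habs
  refine habs.congr' ?_
  filter_upwards [hnorm.eventually (eventually_gt_atTop 0)] with x hx
  exact (norm_mul_norm_Kalpha α (norm_pos_iff.1 hx)).symm
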